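/- Let μ be a probability measure on ℝ with bounded support, and for y ∈ ℝ let ψ_y be the translation of μ by y. Fix z, c, d ∈ ℝ with c < d, and define the correspondence H(y) = { c·ψ_y((-∞,z)) + d·ψ_y((z,∞)) + ψ_y({z})·(r·c + (1-r)·d) : r ∈ [0,1] }. Then the range of H (the union of H(y) over all y ∈ ℝ) equals the interval [c, d]. -/

import Mathlib

open MeasureTheory

/-!
With `t = z - y` and `μ (Iio t) + μ {t} + μ (Ioi t) = 1`, every element of `H(y)` has the form
`d - (d - c) * (μ (Iio t) + r * μ {t})`. So the claim is that the randomised distribution function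
`μ (Iio t) + r * μ {t}` takes exactly the values in `[0, 1]`. Given `q ∈ [0, 1]`, the cdf `F` of `μ`
jumps across `q` at the quantile `t = inf {x | q ≤ F x}`, i.e. `F (t⁻) ≤ q ≤ F t`, and `r` interpolates
inside the atom at `t`; bounded support guarantees that `F` attains `0` and `1`, so that `t` exists
even for `q = 0` or `q = 1`.
-/

open Set Filter Function Topology

lemma measureReal_Iio_add_singleton_add_Ioi {α : Type*} [LinearOrder α] [TopologicalSpace α]
    [OrderClosedTopology α] [MeasurableSpace α] [OpensMeasurableSpace α]
    (μ : Measure α) [IsFiniteMeasure μ] (t : α) :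
    μ.real (Iio t) + μ.real {t} + μ.real (Ioi t) = μ.real univ := by
  rw [← measureReal_union (by simp) (measurableSet_singleton t), Iio_union_right,
    ← measureReal_union (Iic_disjoint_Ioi le_rfl) measurableSet_Ioi,
    Iic_union_Ioi]

lemma exists_mem_Icc_add_mul_eq {p m q : ℝ} (hpq : p ≤ q) (hqm : q ≤ p + m) :
    ∃ r ∈ Icc (0 : ℝ) 1, p + r * m = q := by
  have hq : q ∈ segment ℝ p (p + m) := by
    rw [segment_eq_Icc (hpq.trans hqm)]
    exact ⟨hpq, hqm⟩
  rw [segment_eq_image'] at hq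
  obtain ⟨r, hr, rfl⟩ := hq
  exact ⟨r, hr, by simp⟩

lemma StieltjesFunction.exists_leftLim_le_le (f : StieltjesFunction ℝ) {a b q : ℝ}
    (ha : f a ≤ q) (hb : q ≤ f b) : ∃ t, leftLim f t ≤ q ∧ q ≤ f t := by
  set S := {x | a ≤ x ∧ q ≤ f x}
  have hS : S.Nonempty := ⟨max a b, le_max_left a b, hb.trans (f.mono (le_max_right a b))⟩
  have hSa : BddBelow S := ⟨a, fun x hx => hx.1⟩
  have below : ∀ x < sInf S, f x ≤ q := by
    intro x hx
    by_cases hxa : a ≤ x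
    · exact le_of_not_ge fun h => hx.not_ge (csInf_le hSa ⟨hxa, h⟩)
    · exact (f.mono (not_le.1 hxa).le).trans ha
  have above : ∀ x > sInf S, q ≤ f x := by
    intro x hx
    obtain ⟨s, hs, hsx⟩ := exists_lt_of_csInf_lt hS hx
    exact hs.2.trans (f.mono hsx.le)
  refine ⟨sInf S, ?_, ?_⟩
  · exact le_of_tendsto (f.mono.tendsto_leftLim _) (eventually_nhdsWithin_of_forall below)
  · exact ge_of_tendsto ((f.right_continuous _).tendsto.mono_left
      (nhdsWithin_mono _ Ioi_subset_Ici_self)) (eventually_nhdsWithin_of_forall above)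

namespace ProbabilityTheory

variable (μ : Measure ℝ) [IsProbabilityMeasure μ]

lemma measureReal_Iio_eq_leftLim_cdf (t : ℝ) : μ.real (Iio t) = leftLim (cdf μ) t := by
  have h := (cdf μ).measure_Iio (tendsto_cdf_atBot μ) t
  rw [measure_cdf, sub_zero] at h
  rw [measureReal_def, h, ENNReal.toReal_ofReal
    ((cdf_nonneg μ (t - 1)).trans ((monotone_cdf μ).le_leftLim (sub_one_lt t)))]

lemma measureReal_singleton_eq_cdf_sub_leftLim (t : ℝ) :
    μ.real {t} = cdf μ t - leftLim (cdf μ) t := by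
  have h := measureReal_Iio_add_singleton_add_Ioi μ t
  rw [measureReal_Iio_eq_leftLim_cdf] at h
  have := measureReal_add_measureReal_compl (μ := μ) (measurableSet_Iic (a := t))
  rw [compl_Iic, ← cdf_eq_real] at this
  linarith

theorem exists_measureReal_Iio_add_mul_singleton_eq_iff (hbdd : ∃ N : ℝ, μ (Icc (-N) N) = 1)
    (q : ℝ) : (∃ t, ∃ r ∈ Icc (0 : ℝ) 1, μ.real (Iio t) + r * μ.real {t} = q) ↔ q ∈ Icc 0 1 := by
  obtain ⟨N, hN⟩ := hbdd
  constructor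
  · rintro ⟨t, r, ⟨hr₀, hr₁⟩, rfl⟩
    have h := measureReal_Iio_add_singleton_add_Ioi μ t
    rw [probReal_univ] at h
    have := measureReal_nonneg (μ := μ) (s := Iio t)
    have := measureReal_nonneg (μ := μ) (s := {t})
    have := measureReal_nonneg (μ := μ) (s := Ioi t)
    constructor <;> nlinarith
  · rintro ⟨hq₀, hq₁⟩
    have hcdf_lo : cdf μ (-N - 1) ≤ q := by
      have hnull : μ (Icc (-N) N)ᶜ = 0 := (prob_compl_eq_zero_iff measurableSet_Icc).2 hN
      rw [cdf_eq_real, (measureReal_eq_zero_iff).2 (measure_mono_null ?_ hnull)]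
      · exact hq₀
      · intro x hx h
        linarith [h.1.trans hx]
    have hcdf_hi : q ≤ cdf μ N := by
      rw [cdf_eq_real]
      calc q ≤ μ.real (Icc (-N) N) := by rw [measureReal_def, hN]; simpa using hq₁
        _ ≤ μ.real (Iic N) := measureReal_mono fun x hx => hx.2
    obtain ⟨t, hlo, hhi⟩ := (cdf μ).exists_leftLim_le_le hcdf_lo hcdf_hi
    obtain ⟨r, hr, hrq⟩ := exists_mem_Icc_add_mul_eq (m := μ.real {t}) hlo (by
      rw [measureReal_singleton_eq_cdf_sub_leftLim]; linarith)
    exact ⟨t, r, hr, by rwa [measureReal_Iio_eq_leftLim_cdf]⟩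

end ProbabilityTheory

/-- The range of the correspondence `H` equals `[c, d]`. -/
theorem stmt_0 (μ : Measure ℝ) [IsProbabilityMeasure μ]
    (hbdd : ∃ N : ℝ, μ (Set.Icc (-N) N) = 1) (z c d : ℝ) (hcd : c < d) :
    (⋃ y : ℝ, {u : ℝ | ∃ r ∈ Set.Icc (0:ℝ) 1,
      u = c * (μ ((· + y) ⁻¹' Set.Iio z)).toReal
        + d * (μ ((· + y) ⁻¹' Set.Ioi z)).toReal
        + (μ ((· + y) ⁻¹' {z})).toReal * (r * c + (1 - r) * d)}) = Set.Icc c d := by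
  have hdc : 0 < d - c := sub_pos.2 hcd
  have hH : ∀ y r : ℝ, c * (μ ((· + y) ⁻¹' Iio z)).toReal + d * (μ ((· + y) ⁻¹' Ioi z)).toReal
      + (μ ((· + y) ⁻¹' {z})).toReal * (r * c + (1 - r) * d)
      = d - (d - c) * (μ.real (Iio (z - y)) + r * μ.real {z - y}) := by
    intro y r
    have h := measureReal_Iio_add_singleton_add_Ioi μ (z - y)
    rw [probReal_univ] at h
    simp only [preimage_add_const_Iio, preimage_add_const_Ioi, preimage_add_right_singleton,
      ← sub_eq_add_neg, ← measureReal_def]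
    linear_combination d * h
  have hu : ∀ u X : ℝ, u = d - (d - c) * X ↔ X = (d - u) / (d - c) := fun u X => by
    rw [eq_div_iff hdc.ne']
    constructor <;> intro <;> linarith
  ext u
  simp only [mem_iUnion, mem_ofPred_eq, hH, hu]
  calc (∃ y, ∃ r ∈ Icc (0 : ℝ) 1, μ.real (Iio (z - y)) + r * μ.real {z - y} = (d - u) / (d - c))
      ↔ ∃ t, ∃ r ∈ Icc (0 : ℝ) 1, μ.real (Iio t) + r * μ.real {t} = (d - u) / (d - c) :=
        ⟨fun ⟨y, h⟩ => ⟨z - y, h⟩, fun ⟨t, h⟩ => ⟨z - t, by rwa [sub_sub_cancel]⟩⟩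
    _ ↔ (d - u) / (d - c) ∈ Icc 0 1 :=
      ProbabilityTheory.exists_measureReal_Iio_add_mul_singleton_eq_iff μ hbdd _
    _ ↔ u ∈ Icc c d := by
      rw [mem_Icc, mem_Icc, le_div_iff₀ hdc, div_le_one hdc, zero_mul, sub_nonneg,
        sub_le_sub_iff_left, and_comm]
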